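/- arXiv:1904.09017 — 2 statements merged into one kernel-verified Lean document; each statement's English description precedes it below -/
import Mathlib

section
/- Let 𝒜 be a finite partially ordered set, V a vector space over a field K, and W : 𝒜 → Submodule K V a monotone map. Then W is decomposable if and only if W satisfies the intersection property (I). -/
/-!
If `s` is a decomposition, then on a lower set `L` the span `W(L)` equals `⨆ b ∈ L, s b`. Writing
`B = (B ∩ C) ∪ (B \ C)`, the modular law reduces (I) to `⨆ b ∈ B \ C, s b` meeting
`⨆ c ∈ C, s c` trivially, which is independence.

Conversely, take `s a` to be a complement of `W(< a) = ⨆ b < a, W b` inside `W a`; well-founded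
induction gives `W a = ⨆ b ≤ a, s b`. For independence it suffices, removing maximal elements
one at a time, that `s a` is disjoint from `W(L)` for the lower set `L = {b | ¬ a ≤ b}`; by (I),
`s a ⊓ W(L) ≤ W(≤ a) ⊓ W(L) ≤ W(< a)`, which meets `s a` trivially.
-/

section

variable {α A : Type*} [CompleteLattice α] [PartialOrder A]

def IsDecomposition (W s : A → α) : Prop :=
  iSupIndep s ∧ ∀ a, W a = ⨆ b, ⨆ _ : b ≤ a, s b

def HasIntersectionProperty (W : A → α) : Prop :=
  ∀ B C : Set A, IsLowerSet B → IsLowerSet C →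
    (⨆ b ∈ B, W b) ⊓ (⨆ c ∈ C, W c) ≤ ⨆ a ∈ B ∩ C, W a

lemma biSup_eq_biSup_of_isLowerSet {W s : A → α} (hWs : ∀ a, W a = ⨆ b, ⨆ _ : b ≤ a, s b)
    {L : Set A} (hL : IsLowerSet L) : ⨆ a ∈ L, W a = ⨆ a ∈ L, s a := by
  refine le_antisymm (iSup₂_le fun a ha => ?_) (iSup₂_mono fun a _ => ?_)
  · rw [hWs a]
    exact iSup₂_le fun b hba => le_biSup s (hL hba ha)
  · rw [hWs a]
    exact le_biSup s le_rfl

lemma iSupIndep_of_disjoint_biSup_not_le [IsModularLattice α] [Finite A] {s : A → α}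
    (h : ∀ a, Disjoint (s a) (⨆ b, ⨆ _ : ¬ a ≤ b, s b)) : iSupIndep s := by
  classical
  cases nonempty_fintype A
  rw [iSupIndep_iff_supIndep_univ]
  suffices ∀ F : Finset A, F.SupIndep s from this _
  intro F
  induction F using Finset.strongInduction with
  | H F ih =>
    rcases F.eq_empty_or_nonempty with rfl | hF
    · exact Finset.supIndep_empty s
    obtain ⟨m, hm⟩ := F.exists_maximal hF
    rw [← Finset.insert_erase hm.prop]
    refine (ih _ (Finset.erase_ssubset hm.prop)).insert ((h m).mono_right ?_)
    rw [Finset.sup_eq_iSup]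
    refine biSup_mono fun b hb hmb => Finset.ne_of_mem_erase hb ?_
    exact (hm.eq_of_le (Finset.mem_of_mem_erase hb) hmb).symm

namespace IsDecomposition

variable {W s : A → α}

theorem hasIntersectionProperty [IsModularLattice α] [IsCompactlyGenerated α]
    (h : IsDecomposition W s) : HasIntersectionProperty W := by
  intro B C hB hC
  rw [biSup_eq_biSup_of_isLowerSet h.2 hB, biSup_eq_biSup_of_isLowerSet h.2 hC,
    biSup_eq_biSup_of_isLowerSet h.2 (hB.inter hC), ← Set.inter_union_sdiff B C, iSup_union,
    sup_inf_assoc_of_le _ (biSup_mono fun _ ha => ha.2),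
    (h.1.disjoint_biSup_biSup Set.disjoint_sdiff_left).eq_bot, sup_bot_eq, Set.inter_union_sdiff]

end IsDecomposition

lemma eq_biSup_le_of_biSup_lt_sup_eq [WellFoundedLT A] {W s : A → α}
    (hs : ∀ a, (⨆ b, ⨆ _ : b < a, W b) ⊔ s a = W a) (a : A) :
    W a = ⨆ b, ⨆ _ : b ≤ a, s b := by
  induction a using WellFoundedLT.induction with
  | _ a ih =>
    refine le_antisymm ?_ (iSup₂_le fun b hba => ?_)
    · rw [← hs a]
      refine sup_le (iSup₂_le fun b hba => ?_) (le_biSup s le_rfl)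
      rw [ih b hba]
      exact iSup₂_le fun c hcb => le_biSup s (hcb.trans hba.le)
    · rcases hba.lt_or_eq with hba | rfl
      · calc s b ≤ W b := hs b ▸ le_sup_right
          _ ≤ ⨆ c, ⨆ _ : c < a, W c := le_biSup W hba
          _ ≤ W a := hs a ▸ le_sup_left
      · exact hs b ▸ le_sup_right

namespace HasIntersectionProperty

variable {W : A → α}

lemma disjoint_biSup_not_le (hI : HasIntersectionProperty W) {s : A → α}
    (hWs : ∀ a, W a = ⨆ b, ⨆ _ : b ≤ a, s b) {a : A}
    (hdisj : Disjoint (⨆ b, ⨆ _ : b < a, W b) (s a)) :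
    Disjoint (s a) (⨆ b, ⨆ _ : ¬ a ≤ b, s b) := by
  have hL : IsLowerSet {b | ¬ a ≤ b} := fun b c hcb hb hac => hb (hac.trans hcb)
  change Disjoint (s a) (⨆ b ∈ {b | ¬ a ≤ b}, s b)
  rw [← biSup_eq_biSup_of_isLowerSet hWs hL]
  have hsa : s a ≤ ⨆ b ∈ Set.Iic a, W b :=
    (hWs a ▸ le_biSup s le_rfl : s a ≤ W a).trans (le_biSup W (Set.mem_Iic.2 le_rfl))
  have hbelow : s a ⊓ ⨆ b ∈ {b | ¬ a ≤ b}, W b ≤ ⨆ b, ⨆ _ : b < a, W b :=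
    calc s a ⊓ ⨆ b ∈ {b | ¬ a ≤ b}, W b
        ≤ (⨆ b ∈ Set.Iic a, W b) ⊓ ⨆ b ∈ {b | ¬ a ≤ b}, W b := inf_le_inf_right _ hsa
      _ ≤ ⨆ b ∈ Set.Iic a ∩ {b | ¬ a ≤ b}, W b := hI _ _ (fun _ _ => le_trans) hL
      _ ≤ ⨆ b, ⨆ _ : b < a, W b :=
        iSup₂_le fun b hb => le_biSup W (lt_of_le_not_ge hb.1 hb.2)
  exact disjoint_iff_inf_le.2 ((le_inf inf_le_left hbelow).trans hdisj.symm.le_bot)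

theorem exists_isDecomposition [IsModularLattice α] [ComplementedLattice α] [Finite A]
    (hW : Monotone W) (hI : HasIntersectionProperty W) : ∃ s, IsDecomposition W s := by
  have hcompl (a : A) : ∃ t, Disjoint (⨆ b, ⨆ _ : b < a, W b) t ∧
      (⨆ b, ⨆ _ : b < a, W b) ⊔ t = W a :=
    IsModularLattice.exists_disjoint_and_sup_eq (iSup₂_le fun _ hba => hW hba.le)
  choose s hdisj hsup using hcompl
  have hWs := eq_biSup_le_of_biSup_lt_sup_eq hsup
  exact ⟨s, iSupIndep_of_disjoint_biSup_not_le fun a => hI.disjoint_biSup_not_le hWs (hdisj a),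
    hWs⟩

end HasIntersectionProperty

end

/-- For a finite poset `𝒜`, a monotone `W : 𝒜 → Submodule K V` is
decomposable iff it satisfies the intersection property (I). -/
theorem stmt_2 {K V A : Type*} [Field K] [AddCommGroup V] [Module K V]
    [PartialOrder A] [Finite A]
    (W : A → Submodule K V) (hW : Monotone W) :
    (∃ s : A → Submodule K V,
        (∀ a : A, s a ⊓ (⨆ b, ⨆ _ : b ≠ a, s b) = ⊥) ∧
        (∀ a : A, W a = ⨆ b, ⨆ _ : b ≤ a, s b)) ↔
      (∀ B C : Set A, IsLowerSet B → IsLowerSet C →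
        (⨆ b ∈ B, W b) ⊓ (⨆ c ∈ C, W c) ≤ ⨆ a ∈ B ∩ C, W a) := by
  refine ⟨fun ⟨s, hs, hWs⟩ => ?_, fun hI => ?_⟩
  · exact IsDecomposition.hasIntersectionProperty
      ⟨iSupIndep_def.2 fun a => disjoint_iff.2 (hs a), hWs⟩
  · obtain ⟨s, hs, hWs⟩ := HasIntersectionProperty.exists_isDecomposition hW hI
    exact ⟨s, fun a => disjoint_iff.1 (iSupIndep_def.1 hs a), hWs⟩
end

section
/- Let 𝒜 be a well-founded partially ordered set, V a vector space over a field K, and W : 𝒜 → Submodule K V a monotone map. Then W satisfies the intersection property (I) if and only if W satisfies condition (C). -/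
/-!
(I) ⇒ (C) is (I) applied to the lower sets `{b | b ≤ a}` and `{b | ¬ a ≤ b}`, whose
intersection is `{b | b < a}`.

(C) ⇒ (I): an element `x` of `W(B) ⊓ W(C)` lies in `⨆ b ∈ F, W b` for a finite multiset
`F ⊆ B`. If `F ⊄ C`, take `a ∈ F \ C` maximal in `F` and write `x = y + z` with `y ∈ W a` and
`z` in the sum of the `W b` over the other elements `b` of `F`, none of which lies above `a`.
Since `C` is a lower set not containing `a`, both `x` and `z` lie in `⨆_{¬ a ≤ b} W b`, hence so
does `y`, and (C) moves `y` into finitely many `W g` with `g < a`. Replacing the copies of `a`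
in `F` by these `g` decreases `F` in the Dershowitz–Manna order, which is well founded, so
eventually `F ⊆ C`.
-/

open Multiset

section Lattice

variable {ι α : Type*} [CompleteLattice α] (f : ι → α)

lemma Multiset.iSup_mem_add (M N : Multiset ι) :
    ⨆ i ∈ M + N, f i = (⨆ i ∈ M, f i) ⊔ ⨆ i ∈ N, f i := by
  simp only [Multiset.mem_add, iSup_or, iSup_sup_eq]

lemma Multiset.iSup_mem_le_sup_filter_ne [DecidableEq ι] (M : Multiset ι) (a : ι) :
    ⨆ i ∈ M, f i ≤ f a ⊔ ⨆ i ∈ M.filter (· ≠ a), f i := by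
  refine iSup₂_le fun i hi => ?_
  rcases eq_or_ne i a with rfl | hia
  · exact le_sup_left
  · exact le_sup_of_le_right (le_iSup₂_of_le i (Multiset.mem_filter.mpr ⟨hi, hia⟩) le_rfl)

end Lattice

lemma Multiset.exists_maximal_notMem_of_isLowerSet {A : Type*} [PartialOrder A]
    {C : Set A} (hC : IsLowerSet C) {F : Multiset A} (hF : ∃ b ∈ F, b ∉ C) :
    ∃ a ∈ F, a ∉ C ∧ ∀ b ∈ F, a ≤ b → b = a := by
  obtain ⟨a, ⟨haF, haC⟩, hmax⟩ := Set.Finite.exists_maximal (s := {b | b ∈ F ∧ b ∉ C})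
    (F.finite_toSet.subset fun _ hb => hb.1) hF
  refine ⟨a, haF, haC, fun b hbF hab => ?_⟩
  have hbC : b ∉ C := fun hbC => haC (hC hab hbC)
  exact (hmax ⟨hbF, hbC⟩ hab).antisymm hab

lemma Multiset.isDershowitzMannaLT_add_filter_ne {A : Type*} [Preorder A] [DecidableEq A]
    {F G : Multiset A} {a : A} (ha : a ∈ F) (hG : ∀ g ∈ G, g < a) :
    IsDershowitzMannaLT (F.filter (· ≠ a) + G) F := by
  have haZ : a ∈ F.filter (¬ · ≠ a) := mem_filter.mpr ⟨ha, not_not.mpr rfl⟩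
  refine ⟨F.filter (· ≠ a), G, F.filter (¬ · ≠ a), fun hZ => ?_, rfl, (filter_add_not _ F).symm,
    fun g hg => ⟨a, haZ, hG g hg⟩⟩
  rw [hZ, empty_eq_zero] at haZ
  exact notMem_zero a haZ

lemma Submodule.exists_multiset_of_mem_biSup {K V ι : Type*} [Semiring K] [AddCommMonoid V]
    [Module K V] {W : ι → Submodule K V} {p : ι → Prop} {x : V}
    (hx : x ∈ ⨆ i, ⨆ _ : p i, W i) : ∃ F : Multiset ι, (∀ i ∈ F, p i) ∧ x ∈ ⨆ i ∈ F, W i := by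
  classical
  obtain ⟨s, hs⟩ := Submodule.mem_iSup_iff_exists_finset.mp hx
  have hle : ⨆ i ∈ s, ⨆ _ : p i, W i ≤ ⨆ i ∈ (s.filter p).val, W i :=
    iSup₂_le fun i hi => iSup_le fun hpi =>
      le_iSup₂_of_le i (Finset.mem_filter.mpr ⟨hi, hpi⟩) le_rfl
  exact ⟨(s.filter p).val, fun i hi => (Finset.mem_filter.mp hi).2, hle hs⟩

section Conditions

variable {A L : Type*} [Preorder A] [CompleteLattice L] (W : A → L)

def IntersectionProperty : Prop :=
  ∀ B C : Set A, IsLowerSet B → IsLowerSet C →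
    (⨆ b ∈ B, W b) ⊓ (⨆ c ∈ C, W c) ≤ ⨆ a ∈ B ∩ C, W a

def ConditionC : Prop :=
  ∀ a : A, W a ⊓ (⨆ b, ⨆ _ : ¬ a ≤ b, W b) ≤ ⨆ b, ⨆ _ : b < a, W b

variable {W}

theorem IntersectionProperty.conditionC (hW : IntersectionProperty W) : ConditionC W := by
  intro a
  calc W a ⊓ (⨆ b, ⨆ _ : ¬ a ≤ b, W b)
      ≤ (⨆ b ∈ {b | b ≤ a}, W b) ⊓ ⨆ b ∈ {b | ¬ a ≤ b}, W b :=
        inf_le_inf_right _ (le_iSup₂_of_le a le_rfl le_rfl)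
    _ ≤ ⨆ b ∈ {b | b ≤ a} ∩ {b | ¬ a ≤ b}, W b :=
        hW _ _ (fun _ _ hcb hb => hcb.trans hb) (fun _ _ hcb hb hac => hb (hac.trans hcb))
    _ ≤ ⨆ b, ⨆ _ : b < a, W b := biSup_mono fun _ hb => lt_of_le_not_ge hb.1 hb.2

end Conditions

section Submodule

variable {K V A : Type*} [Ring K] [AddCommGroup V] [Module K V] [PartialOrder A]
  {W : A → Submodule K V}

lemma ConditionC.exists_mem_biSup_of_maximal [DecidableEq A] (hW : ConditionC W) {C : Set A}
    (hC : IsLowerSet C) {F : Multiset A} {a : A} (haC : a ∉ C) (hmax : ∀ b ∈ F, a ≤ b → b = a)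
    {x : V} (hxF : x ∈ ⨆ b ∈ F, W b) (hxC : x ∈ ⨆ c ∈ C, W c) :
    ∃ G : Multiset A, (∀ g ∈ G, g < a) ∧ x ∈ ⨆ b ∈ F.filter (· ≠ a) + G, W b := by
  obtain ⟨y, hy, z, hz, rfl⟩ := Submodule.mem_sup.mp (iSup_mem_le_sup_filter_ne W F a hxF)
  have hF₀ : ∀ b ∈ F.filter (· ≠ a), ¬ a ≤ b :=
    fun b hb hab => (mem_filter.mp hb).2 (hmax b (mem_filter.mp hb).1 hab)
  have hzA : z ∈ ⨆ b, ⨆ _ : ¬ a ≤ b, W b := biSup_mono (f := W) hF₀ hz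
  have hCA : ∀ c ∈ C, ¬ a ≤ c := fun c hc hac => haC (hC hac hc)
  have hxA : y + z ∈ ⨆ b, ⨆ _ : ¬ a ≤ b, W b := biSup_mono (f := W) hCA hxC
  have hyA : y ∈ ⨆ b, ⨆ _ : ¬ a ≤ b, W b := by
    simpa using sub_mem hxA hzA
  obtain ⟨G, hG, hyG⟩ := Submodule.exists_multiset_of_mem_biSup (hW a ⟨hy, hyA⟩)
  refine ⟨G, hG, ?_⟩
  rw [iSup_mem_add, add_comm y z]
  exact Submodule.add_mem_sup hz hyG

lemma ConditionC.biSup_multiset_inf_le [WellFoundedLT A] (hW : ConditionC W) {B C : Set A}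
    (hB : IsLowerSet B) (hC : IsLowerSet C) (F : Multiset A) (hFB : ∀ b ∈ F, b ∈ B) :
    (⨆ b ∈ F, W b) ⊓ (⨆ c ∈ C, W c) ≤ ⨆ a ∈ B ∩ C, W a := by
  classical
  induction F using (wellFounded_isDershowitzMannaLT (α := A)).induction with
  | _ F ih =>
  by_cases hFC : ∀ b ∈ F, b ∈ C
  · exact inf_le_left.trans (biSup_mono fun b hb => ⟨hFB b hb, hFC b hb⟩)
  push Not at hFC
  obtain ⟨a, haF, haC, hmax⟩ := exists_maximal_notMem_of_isLowerSet hC hFC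
  rintro x ⟨hxF, hxC⟩
  obtain ⟨G, hG, hxN⟩ := hW.exists_mem_biSup_of_maximal hC haC hmax hxF hxC
  refine ih _ (isDershowitzMannaLT_add_filter_ne haF hG) (fun b hb => ?_) ⟨hxN, hxC⟩
  rcases mem_add.mp hb with hb | hb
  · exact hFB b (mem_filter.mp hb).1
  · exact hB (hG b hb).le (hFB a haF)

theorem ConditionC.intersectionProperty [WellFoundedLT A] (hW : ConditionC W) :
    IntersectionProperty W := by
  rintro B C hB hC x ⟨hxB, hxC⟩
  obtain ⟨F, hFB, hxF⟩ := Submodule.exists_multiset_of_mem_biSup hxB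
  exact hW.biSup_multiset_inf_le hB hC F hFB ⟨hxF, hxC⟩

end Submodule

theorem stmt_9_general {K V A : Type*} [Field K] [AddCommGroup V] [Module K V]
    [PartialOrder A] [WellFoundedLT A]
    (W : A → Submodule K V) :
    (∀ B C : Set A, IsLowerSet B → IsLowerSet C →
        (⨆ b ∈ B, W b) ⊓ (⨆ c ∈ C, W c) ≤ ⨆ a ∈ B ∩ C, W a) ↔
      (∀ a : A, W a ⊓ (⨆ b, ⨆ _ : ¬ a ≤ b, W b) ≤ ⨆ b, ⨆ _ : b < a, W b) :=
  ⟨IntersectionProperty.conditionC, ConditionC.intersectionProperty⟩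

/-- For a well-founded poset `𝒜`, a monotone `W : 𝒜 → Submodule K V`
satisfies the intersection property (I) iff it satisfies condition (C). -/
theorem stmt_9 {K V A : Type*} [Field K] [AddCommGroup V] [Module K V]
    [PartialOrder A] [WellFoundedLT A]
    (W : A → Submodule K V) (hW : Monotone W) :
    (∀ B C : Set A, IsLowerSet B → IsLowerSet C →
        (⨆ b ∈ B, W b) ⊓ (⨆ c ∈ C, W c) ≤ ⨆ a ∈ B ∩ C, W a) ↔
      (∀ a : A, W a ⊓ (⨆ b, ⨆ _ : ¬ a ≤ b, W b) ≤ ⨆ b, ⨆ _ : b < a, W b) :=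
  stmt_9_general W
end
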